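/- Let T be a contraction on H with block form T = [[W, R],[0, W']] on H = G ⊕ G^⊥, where W and W' are partial isometries on G and G^⊥ respectively. If |T| ≤ |Re T|, then T is self-adjoint. -/

import Mathlib

/-!
Let `M = ker (1 - T*T)`, the subspace on which the contraction `T` is isometric. For `x ∈ M`,
`‖x‖² = ⟪T*T x, x⟫ ≤ ⟪|T| x, x⟫ ≤ ⟪|Re T| x, x⟫` forces `|Re T| x = x`, hence `‖Re T x‖ = ‖x‖`,
and as `‖T x‖, ‖T* x‖ ≤ ‖x‖` strict convexity gives `T* x = T x`. Then `‖T* x‖ = ‖x‖`, so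
`T (T x) = T (T* x) = x` and `T x ∈ M`. Thus `M` reduces `T`, and `T* = T` on `M`.

The initial spaces of the partial isometries `W` and `W'` lie in `M`, so `W` and `W'` vanish on
the two components of any vector of `M^⊥`. Hence `T` maps `M^⊥` into `G` and kills `M^⊥ ∩ G`,
i.e. `T² = 0` on `M^⊥`, and by duality `T*² = 0` there too. On `U = M^⊥ ∩ ker T*` this gives
`(Re T)² = T*T / 4`, so `|T| = 2 |Re T|` on `U`, which together with `|T| ≤ |Re T|` forces
`T = 0` on `U`. Since `T*` maps `M^⊥` into `U`, first `T*` and then `T` vanish on `M^⊥`.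
-/

open ContinuousLinearMap

/-- The modulus `|T| = (T*T)^{1/2}` of an operator. -/
noncomputable def absOp {H : Type*} [NormedAddCommGroup H] [InnerProductSpace ℂ H]
    [CompleteSpace H] (T : H →L[ℂ] H) : H →L[ℂ] H :=
  CFC.sqrt (adjoint T * T)

/-- The real part `Re T = (T + T*)/2` of an operator. -/
noncomputable def reOp {H : Type*} [NormedAddCommGroup H] [InnerProductSpace ℂ H]
    [CompleteSpace H] (T : H →L[ℂ] H) : H →L[ℂ] H :=
  (2 : ℂ)⁻¹ • (T + adjoint T)

/-- `|Re T| = ((Re T)^2)^{1/2}`. -/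
noncomputable def absRe {H : Type*} [NormedAddCommGroup H] [InnerProductSpace ℂ H]
    [CompleteSpace H] (T : H →L[ℂ] H) : H →L[ℂ] H :=
  CFC.sqrt (reOp T ^ 2)

open scoped InnerProductSpace
open RCLike

theorem eq_of_norm_le_of_norm_add_eq (𝕜 : Type*) {E : Type*} [RCLike 𝕜] [NormedAddCommGroup E]
    [InnerProductSpace 𝕜 E] {a b : E} {r : ℝ} (ha : ‖a‖ ≤ r) (hb : ‖b‖ ≤ r)
    (hab : ‖a + b‖ = 2 * r) : a = b := by
  have h := parallelogram_law_with_norm 𝕜 a b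
  rw [← sub_eq_zero, ← norm_eq_zero]
  nlinarith [norm_nonneg a, norm_nonneg b, norm_nonneg (a - b)]

theorem CStarAlgebra.mul_self_le_self {A : Type*} [CStarAlgebra A] [PartialOrder A]
    [StarOrderedRing A] {a : A} (ha : 0 ≤ a) (ha₁ : ‖a‖ ≤ 1) : a * a ≤ a := by
  set s := CFC.sqrt a
  have hs : s * s = a := CFC.sqrt_mul_sqrt_self a
  calc a * a = s * a * s := by rw [← hs]; simp only [mul_assoc]
    _ ≤ s * 1 * s := conjugate_le_conjugate_of_nonneg
        ((CStarAlgebra.norm_le_one_iff_of_nonneg a).mp ha₁) (CFC.sqrt_nonneg a)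
    _ = a := by rw [mul_one, hs]

namespace ContinuousLinearMap

variable {𝕜 E F : Type*} [RCLike 𝕜] [NormedAddCommGroup E] [InnerProductSpace 𝕜 E]
  [NormedAddCommGroup F] [InnerProductSpace 𝕜 F]

theorem re_inner_le_re_inner_of_le {A B : E →L[𝕜] E} (h : A ≤ B) (x : E) :
    re ⟪A x, x⟫_𝕜 ≤ re ⟪B x, x⟫_𝕜 := by
  have := ((le_def A B).mp h).re_inner_nonneg_left x
  rw [sub_apply, inner_sub_left, map_sub] at this
  linarith

theorem apply_eq_self_of_norm_le_one {B : E →L[𝕜] E} (hB : ‖B‖ ≤ 1) {x : E}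
    (hx : ‖x‖ ^ 2 ≤ re ⟪B x, x⟫_𝕜) : B x = x := by
  have hBx : ‖B x‖ ≤ ‖x‖ := by simpa using B.le_of_opNorm_le hB x
  have h := norm_sub_sq (𝕜 := 𝕜) (B x) x
  rw [← sub_eq_zero, ← norm_eq_zero, ← sq_eq_zero_iff]
  nlinarith [norm_nonneg (B x), norm_nonneg x, sq_nonneg ‖B x - x‖]

variable [CompleteSpace E] [CompleteSpace F]

theorem norm_adjoint (A : E →L[𝕜] F) : ‖adjoint A‖ = ‖A‖ :=
  LinearIsometryEquiv.norm_map _ A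

theorem norm_apply_eq_of_adjoint_apply_apply_eq {V : E →L[𝕜] F} {x : E}
    (hx : adjoint V (V x) = x) : ‖V x‖ = ‖x‖ := by
  have h := V.apply_norm_sq_eq_inner_adjoint_left x
  rw [comp_apply, hx, inner_self_eq_norm_sq] at h
  exact (sq_eq_sq₀ (norm_nonneg _) (norm_nonneg _)).mp h

theorem adjoint_apply_apply_eq_self_iff {V : E →L[𝕜] F} (hV : ‖V‖ ≤ 1) {x : E} :
    adjoint V (V x) = x ↔ ‖V x‖ = ‖x‖ := by
  refine ⟨V.norm_apply_eq_of_adjoint_apply_apply_eq, fun hx => ?_⟩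
  have hVV : ‖adjoint V ∘L V‖ ≤ 1 := by
    rw [norm_adjoint_comp_self]
    nlinarith [norm_nonneg V]
  refine (adjoint V ∘L V).apply_eq_self_of_norm_le_one hVV ?_
  rw [← apply_norm_sq_eq_inner_adjoint_left, hx]

-- `IsIdempotentElem (V* V)` says that `V` is a partial isometry with initial space
-- `{g | V* V g = g}`.
theorem apply_eq_zero_of_forall_inner_eq_zero {V : E →L[𝕜] F}
    (hV : IsIdempotentElem (adjoint V ∘L V)) {a : E}
    (ha : ∀ g, adjoint V (V g) = g → ⟪g, a⟫_𝕜 = 0) : V a = 0 := by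
  have h := V.apply_norm_sq_eq_inner_adjoint_left a
  rw [comp_apply, ha (adjoint V (V a)) (DFunLike.congr_fun hV a), map_zero, sq_eq_zero_iff,
    norm_eq_zero] at h
  exact h

theorem apply_mem_orthogonal_of_forall_adjoint_apply_mem {A : E →L[𝕜] E} {K : Submodule 𝕜 E}
    (hK : ∀ x ∈ K, adjoint A x ∈ K) {x : E} (hx : x ∈ Kᗮ) : A x ∈ Kᗮ :=
  (Module.End.mem_invtSubmodule_iff_forall_mem_of_mem _).mp
    (orthogonal_mem_invtSubmodule ((Module.End.mem_invtSubmodule_iff_forall_mem_of_mem _).mpr hK))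
    x hx

theorem commute_starProjection_of_forall_mem {C : E →L[𝕜] E} (hC : IsSelfAdjoint C)
    {U : Submodule 𝕜 E} [U.HasOrthogonalProjection] (hU : ∀ u ∈ U, C u ∈ U) :
    Commute C U.starProjection := by
  have hCP : U.starProjection * C * U.starProjection = C * U.starProjection := by
    ext x
    exact U.starProjection_eq_self_iff.mpr (hU _ (U.starProjection_apply_mem x))
  have hPC := congrArg star hCP
  simp only [star_mul, hC.star_eq, (isSelfAdjoint_starProjection U).star_eq, ← mul_assoc] at hPC
  exact hCP.symm.trans hPC

end ContinuousLinearMap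

section Modulus

variable {H : Type*} [NormedAddCommGroup H] [InnerProductSpace ℂ H] [CompleteSpace H]
  {U : Submodule ℂ H} [U.HasOrthogonalProjection]

theorem absOp_eq_abs (T : H →L[ℂ] H) : absOp T = CFC.abs T := rfl

theorem isSelfAdjoint_reOp (T : H →L[ℂ] H) : IsSelfAdjoint (reOp T) := by
  simp [IsSelfAdjoint, reOp, star_eq_adjoint, add_comm]

theorem absRe_eq_abs (T : H →L[ℂ] H) : absRe T = CFC.abs (reOp T) := by
  rw [absRe, CFC.abs, (isSelfAdjoint_reOp T).star_eq, sq]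

theorem norm_reOp_le (T : H →L[ℂ] H) : ‖reOp T‖ ≤ ‖T‖ := by
  calc ‖reOp T‖ ≤ 2⁻¹ * (‖T‖ + ‖adjoint T‖) := by
        rw [reOp, norm_smul]
        simpa using norm_add_le T (adjoint T)
    _ = ‖T‖ := by rw [norm_adjoint]; ring

theorem norm_abs_apply (V : H →L[ℂ] H) (x : H) : ‖CFC.abs V x‖ = ‖V x‖ := by
  have hsa : adjoint (CFC.abs V) = CFC.abs V := (CFC.abs_nonneg V).isSelfAdjoint
  rw [← sq_eq_sq₀ (norm_nonneg _) (norm_nonneg _), apply_norm_sq_eq_inner_adjoint_left,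
    apply_norm_sq_eq_inner_adjoint_left, hsa]
  exact congrArg (fun S : H →L[ℂ] H => re ⟪S x, x⟫_ℂ) (CFC.abs_mul_abs V)

theorem adjoint_mul_self_le_absOp {T : H →L[ℂ] H} (hT : ‖T‖ ≤ 1) : adjoint T * T ≤ absOp T := by
  have h := CStarAlgebra.mul_self_le_self (CFC.abs_nonneg T) (by rwa [CFC.norm_abs])
  rwa [CFC.abs_mul_abs] at h

theorem commute_abs_starProjection {T : H →L[ℂ] H} (hU : ∀ u ∈ U, adjoint T (T u) ∈ U) :
    Commute (CFC.abs T) U.starProjection :=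
  (commute_starProjection_of_forall_mem (.star_mul_self T) hU).cfcₙ_nnreal _

theorem abs_mul_starProjection_eq {T : H →L[ℂ] H} (hU : ∀ u ∈ U, adjoint T (T u) ∈ U)
    (hre : ∀ u ∈ U, reOp T (reOp T u) = (4 : ℂ)⁻¹ • adjoint T (T u)) :
    CFC.abs T * U.starProjection =
      CFC.abs (reOp T) * U.starProjection + CFC.abs (reOp T) * U.starProjection := by
  set P := U.starProjection
  have hP : 0 ≤ P := isStarProjection_starProjection.nonneg
  have hReU : ∀ u ∈ U, adjoint (reOp T) (reOp T u) ∈ U := fun u hu => by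
    rw [(isSelfAdjoint_reOp T).adjoint_eq, hre u hu]
    exact U.smul_mem _ (hU u hu)
  have hQ := commute_abs_starProjection hU
  have hB := commute_abs_starProjection hReU
  have hX : 0 ≤ CFC.abs (reOp T) * P := hB.mul_nonneg (CFC.abs_nonneg _) hP
  have hXX : CFC.abs (reOp T) * P * (CFC.abs (reOp T) * P) = (4 : ℂ)⁻¹ • (star T * T * P) := by
    rw [hB.symm.mul_mul_mul_comm, U.isIdempotentElem_starProjection.eq, CFC.abs_mul_abs,
      (isSelfAdjoint_reOp T).star_eq]
    ext x
    exact hre _ (U.starProjection_apply_mem x)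
  -- both sides are nonnegative square roots of `T*T P`
  rw [← CFC.sqrt_mul_self _ (hQ.mul_nonneg (CFC.abs_nonneg _) hP),
    ← CFC.sqrt_mul_self _ (add_nonneg hX hX), hQ.symm.mul_mul_mul_comm,
    U.isIdempotentElem_starProjection.eq, CFC.abs_mul_abs]
  congr 1
  simp only [add_mul, mul_add, hXX]
  module

end Modulus

section IsometricSubspace

variable {𝕜 E : Type*} [RCLike 𝕜] [NormedAddCommGroup E] [InnerProductSpace 𝕜 E]
  [CompleteSpace E]

noncomputable def isometricSubspace (T : E →L[𝕜] E) : Submodule 𝕜 E :=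
  LinearMap.ker ((1 - adjoint T * T : E →L[𝕜] E) : E →ₗ[𝕜] E)

theorem mem_isometricSubspace {T : E →L[𝕜] E} {x : E} :
    x ∈ isometricSubspace T ↔ adjoint T (T x) = x := by
  simp [isometricSubspace, sub_eq_zero, eq_comm (a := x)]

instance (T : E →L[𝕜] E) : CompleteSpace (isometricSubspace T) :=
  (isClosed_ker (1 - adjoint T * T)).completeSpace_coe

variable {T : E →L[𝕜] E} {G : Submodule 𝕜 E}

theorem coe_mem_isometricSubspace_of_restrict [CompleteSpace G] (hT : ‖T‖ ≤ 1)
    {W : G →L[𝕜] G} (hW : ∀ x, (W x : E) = T x) {g : G} (hg : adjoint W (W g) = g) :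
    (g : E) ∈ isometricSubspace T := by
  rw [mem_isometricSubspace, T.adjoint_apply_apply_eq_self_iff hT, ← hW]
  exact W.norm_apply_eq_of_adjoint_apply_apply_eq hg

theorem apply_eq_of_compress (hT : ‖T‖ ≤ 1) {W : Gᗮ →L[𝕜] Gᗮ}
    (hW : ∀ x : Gᗮ, T x - W x ∈ G) {c : Gᗮ} (hc : adjoint W (W c) = c) : T c = W c := by
  have horth : ⟪(W c : E), T c - W c⟫_𝕜 = 0 :=
    Submodule.inner_left_of_mem_orthogonal (hW c) (W c).2
  have hpyth := norm_add_sq_eq_norm_sq_add_norm_sq_of_inner_eq_zero _ _ horth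
  rw [add_sub_cancel] at hpyth
  have hTc : ‖T c‖ ≤ ‖(c : E)‖ := by simpa using T.le_of_opNorm_le hT c
  have hWc : ‖(W c : E)‖ = ‖(c : E)‖ := W.norm_apply_eq_of_adjoint_apply_apply_eq hc
  rw [← sub_eq_zero, ← norm_eq_zero, ← sq_eq_zero_iff]
  nlinarith [sq_nonneg ‖T c - W c‖, norm_nonneg (T c), norm_nonneg (c : E)]

theorem coe_mem_isometricSubspace_of_compress (hT : ‖T‖ ≤ 1) {W : Gᗮ →L[𝕜] Gᗮ}
    (hW : ∀ x : Gᗮ, T x - W x ∈ G) {c : Gᗮ} (hc : adjoint W (W c) = c) :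
    (c : E) ∈ isometricSubspace T := by
  rw [mem_isometricSubspace, T.adjoint_apply_apply_eq_self_iff hT, apply_eq_of_compress hT hW hc]
  exact W.norm_apply_eq_of_adjoint_apply_apply_eq hc

theorem apply_starProjection_eq_zero [CompleteSpace G] (hT : ‖T‖ ≤ 1) {W : G →L[𝕜] G}
    (hW : ∀ x, (W x : E) = T x) (hWW : IsIdempotentElem (adjoint W * W)) {x : E}
    (hx : x ∈ (isometricSubspace T)ᗮ) : T (G.starProjection x) = 0 := by
  have hWx : W (G.orthogonalProjectionOnto x) = 0 := by
    refine W.apply_eq_zero_of_forall_inner_eq_zero hWW fun g hg => ?_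
    rw [Submodule.inner_orthogonalProjectionOnto_eq_of_mem_left]
    exact Submodule.inner_right_of_mem_orthogonal
      (coe_mem_isometricSubspace_of_restrict hT hW hg) hx
  rw [Submodule.starProjection_apply, ← hW, hWx, Submodule.coe_zero]

theorem apply_sub_starProjection_mem [CompleteSpace G] (hT : ‖T‖ ≤ 1) {W : Gᗮ →L[𝕜] Gᗮ}
    (hW : ∀ x : Gᗮ, T x - W x ∈ G) (hWW : IsIdempotentElem (adjoint W * W)) {x : E}
    (hx : x ∈ (isometricSubspace T)ᗮ) : T (x - G.starProjection x) ∈ G := by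
  set b : Gᗮ := ⟨x - G.starProjection x, G.sub_starProjection_mem_orthogonal x⟩
  have hWb : W b = 0 := by
    refine W.apply_eq_zero_of_forall_inner_eq_zero hWW fun c hc => ?_
    rw [Submodule.coe_inner, inner_sub_right,
      Submodule.inner_right_of_mem_orthogonal (coe_mem_isometricSubspace_of_compress hT hW hc) hx,
      Submodule.inner_left_of_mem_orthogonal (G.starProjection_apply_mem x) c.2, sub_zero]
  have h := hW b
  rwa [hWb, Submodule.coe_zero, sub_zero] at h

theorem apply_apply_eq_zero_of_mem_orthogonal [CompleteSpace G] (hT : ‖T‖ ≤ 1) {W : G →L[𝕜] G}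
    (hW : ∀ x, (W x : E) = T x) (hWW : IsIdempotentElem (adjoint W * W)) {W' : Gᗮ →L[𝕜] Gᗮ}
    (hW' : ∀ x : Gᗮ, T x - W' x ∈ G) (hWW' : IsIdempotentElem (adjoint W' * W')) {x : E}
    (hx : x ∈ (isometricSubspace T)ᗮ) (hTx : T x ∈ (isometricSubspace T)ᗮ) :
    T (T x) = 0 := by
  have hTxG : T x ∈ G := by
    rw [← add_sub_cancel (G.starProjection x) x, map_add,
      apply_starProjection_eq_zero hT hW hWW hx, zero_add]
    exact apply_sub_starProjection_mem hT hW' hWW' hx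
  rw [← G.starProjection_eq_self_iff.mpr hTxG]
  exact apply_starProjection_eq_zero hT hW hWW hTx

end IsometricSubspace

section AbsLeAbsRe

variable {H : Type*} [NormedAddCommGroup H] [InnerProductSpace ℂ H] [CompleteSpace H]
  {T : H →L[ℂ] H}

theorem absRe_apply_eq_self (hT : ‖T‖ ≤ 1) (h : absOp T ≤ absRe T) {x : H}
    (hx : adjoint T (T x) = x) : absRe T x = x := by
  have hB : ‖absRe T‖ ≤ 1 := by
    rw [absRe_eq_abs, CFC.norm_abs]
    exact (norm_reOp_le T).trans hT
  refine (absRe T).apply_eq_self_of_norm_le_one hB ?_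
  calc ‖x‖ ^ 2 = re ⟪adjoint T (T x), x⟫_ℂ := by rw [hx, inner_self_eq_norm_sq]
    _ ≤ re ⟪absOp T x, x⟫_ℂ := re_inner_le_re_inner_of_le (adjoint_mul_self_le_absOp hT) x
    _ ≤ re ⟪absRe T x, x⟫_ℂ := re_inner_le_re_inner_of_le h x

theorem adjoint_apply_eq_apply_of_mem_isometricSubspace (hT : ‖T‖ ≤ 1)
    (h : absOp T ≤ absRe T) {x : H} (hx : x ∈ isometricSubspace T) : adjoint T x = T x := by
  rw [mem_isometricSubspace] at hx
  have hRe : ‖reOp T x‖ = ‖x‖ := by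
    rw [← norm_abs_apply, ← absRe_eq_abs, absRe_apply_eq_self hT h hx]
  have hsum : ‖T x + adjoint T x‖ = 2 * ‖x‖ := by
    rw [← hRe, reOp, smul_apply, add_apply, norm_smul, norm_inv, Complex.norm_two]
    ring
  have hTx : ‖T x‖ ≤ ‖x‖ := by simpa using T.le_of_opNorm_le hT x
  have hT'x : ‖adjoint T x‖ ≤ ‖x‖ := by
    simpa using (adjoint T).le_of_opNorm_le ((norm_adjoint T).trans_le hT) x
  exact (eq_of_norm_le_of_norm_add_eq ℂ hTx hT'x hsum).symm

theorem apply_mem_isometricSubspace (hT : ‖T‖ ≤ 1) (h : absOp T ≤ absRe T) {x : H}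
    (hx : x ∈ isometricSubspace T) : T x ∈ isometricSubspace T := by
  have hT' := adjoint_apply_eq_apply_of_mem_isometricSubspace hT h hx
  have hTT' : T (adjoint T x) = x := by
    have := ((adjoint T).adjoint_apply_apply_eq_self_iff ((norm_adjoint T).trans_le hT)).mpr
      (by rw [hT', T.norm_apply_eq_of_adjoint_apply_apply_eq (mem_isometricSubspace.mp hx)])
    rwa [adjoint_adjoint] at this
  rw [mem_isometricSubspace, ← hT', hTT', hT']

theorem apply_eq_zero_of_absOp_le_absRe (h : absOp T ≤ absRe T) {U : Submodule ℂ H}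
    [U.HasOrthogonalProjection] (hU : ∀ u ∈ U, adjoint T (T u) ∈ U)
    (hre : ∀ u ∈ U, reOp T (reOp T u) = (4 : ℂ)⁻¹ • adjoint T (T u)) {u : H} (hu : u ∈ U) :
    T u = 0 := by
  set P := U.starProjection
  have hP : 0 ≤ P := isStarProjection_starProjection.nonneg
  have hPQP : P * CFC.abs T * P = CFC.abs T * P := by
    rw [← (commute_abs_starProjection hU).eq, mul_assoc, U.isIdempotentElem_starProjection.eq]
  have hsplit : P * CFC.abs T * P = P * CFC.abs (reOp T) * P + P * CFC.abs (reOp T) * P := by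
    rw [mul_assoc P, abs_mul_starProjection_eq hU hre, mul_add, ← mul_assoc]
  have hle : P * CFC.abs T * P ≤ P * CFC.abs (reOp T) * P := by
    rw [← absOp_eq_abs, ← absRe_eq_abs]
    exact conjugate_le_conjugate_of_nonneg h hP
  have hPBP : P * CFC.abs (reOp T) * P = 0 := by
    rw [hsplit, add_le_iff_nonpos_left] at hle
    exact le_antisymm hle (conjugate_nonneg_of_nonneg (CFC.abs_nonneg _) hP)
  have hQP : CFC.abs T * P = 0 := by rw [← hPQP, hsplit, hPBP, add_zero]
  rw [← norm_eq_zero, ← norm_abs_apply, ← U.starProjection_eq_self_iff.mpr hu]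
  simpa using DFunLike.congr_fun hQP u

theorem apply_eq_zero_and_adjoint_apply_eq_zero_of_absOp_le_absRe (h : absOp T ≤ absRe T)
    {N : Submodule ℂ H} (hN : IsClosed (N : Set H)) (hTN : ∀ x ∈ N, T x ∈ N)
    (hT'N : ∀ x ∈ N, adjoint T x ∈ N) (hT2 : ∀ x ∈ N, T (T x) = 0) {x : H} (hx : x ∈ N) :
    T x = 0 ∧ adjoint T x = 0 := by
  have hT'2 : ∀ y ∈ N, adjoint T (adjoint T y) = 0 := fun y hy => by
    rw [← inner_self_eq_zero (𝕜 := ℂ), adjoint_inner_left, adjoint_inner_left,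
      hT2 _ (hT'N _ (hT'N y hy)), inner_zero_right]
  set U := N ⊓ LinearMap.ker (adjoint T : H →ₗ[ℂ] H)
  have : CompleteSpace U := (hN.inter (adjoint T).isClosed_ker).completeSpace_coe
  have hTU : ∀ u ∈ U, T u = 0 := by
    refine fun u hu => apply_eq_zero_of_absOp_le_absRe h (fun v hv => ?_) (fun v hv => ?_) hu
    · exact ⟨hT'N _ (hTN v hv.1), hT'2 _ (hTN v hv.1)⟩
    · have hT'v : adjoint T v = 0 := hv.2
      simp only [reOp, smul_apply, add_apply, map_smul, hT'v, hT2 v hv.1, zero_add, add_zero,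
        smul_smul]
      norm_num
  have hT'0 : ∀ y ∈ N, adjoint T y = 0 := fun y hy => by
    rw [← inner_self_eq_zero (𝕜 := ℂ), adjoint_inner_left, hTU _ ⟨hT'N y hy, hT'2 y hy⟩,
      inner_zero_right]
  refine ⟨?_, hT'0 x hx⟩
  rw [← inner_self_eq_zero (𝕜 := ℂ), ← adjoint_inner_right, hT'0 _ (hTN x hx), inner_zero_right]

end AbsLeAbsRe

/-- A contraction with block form `[[W, R],[0, W']]` where `W`, `W'` are partial isometries,
satisfying `|T| ≤ |Re T|`, is self-adjoint. -/
theorem stmt16 {H : Type*} [NormedAddCommGroup H] [InnerProductSpace ℂ H] [CompleteSpace H]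
    (T : H →L[ℂ] H) (hT : ‖T‖ ≤ 1) (G : Submodule ℂ H) [CompleteSpace G]
    (W : G →L[ℂ] G) (hW : ∀ x : G, (W x : H) = T x)
    (hPIW : IsIdempotentElem (adjoint W * W))
    (W' : (Gᗮ : Submodule ℂ H) →L[ℂ] (Gᗮ : Submodule ℂ H))
    (hW' : ∀ x : (Gᗮ : Submodule ℂ H), T x - W' x ∈ G)
    (hPIW' : IsIdempotentElem (adjoint W' * W'))
    (h : absOp T ≤ absRe T) :
    adjoint T = T := by
  set M := isometricSubspace T
  have hMT : ∀ x ∈ M, T x ∈ M := fun x hx => apply_mem_isometricSubspace hT h hx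
  have hMT' : ∀ x ∈ M, adjoint T x ∈ M := fun x hx => by
    rw [adjoint_apply_eq_apply_of_mem_isometricSubspace hT h hx]
    exact hMT x hx
  have hTN : ∀ x ∈ Mᗮ, T x ∈ Mᗮ := fun x =>
    T.apply_mem_orthogonal_of_forall_adjoint_apply_mem hMT'
  have hT'N : ∀ x ∈ Mᗮ, adjoint T x ∈ Mᗮ := fun x =>
    (adjoint T).apply_mem_orthogonal_of_forall_adjoint_apply_mem (by simpa using hMT)
  have hN : ∀ x ∈ Mᗮ, T x = 0 ∧ adjoint T x = 0 := fun x =>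
    apply_eq_zero_and_adjoint_apply_eq_zero_of_absOp_le_absRe h (Submodule.isClosed_orthogonal M)
      hTN hT'N fun y hy => apply_apply_eq_zero_of_mem_orthogonal hT hW hPIW hW' hPIW' hy (hTN y hy)
  exact LinearMap.ext_on_codisjoint (Submodule.isCompl_orthogonal M).codisjoint
    (fun x hx => adjoint_apply_eq_apply_of_mem_isometricSubspace hT h hx)
    (fun x hx => (hN x hx).2.trans (hN x hx).1.symm)
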